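/- arXiv:1507.05710 — 3 statements merged into one kernel-verified Lean document; each statement's English description precedes it below -/
import Mathlib

section
/- Any two distinct exceptional vectors $\ell\ne\ell'$ satisfy $\langle\ell,\ell'\rangle\in\{0,1\}$, and for every exceptional vector $\ell$ there are exactly $10$ exceptional vectors $\ell'$ with $\langle\ell,\ell'\rangle=1$ (the incidence correspondence on the $27$ lines has degree $10$). -/
/-- The symmetric bilinear form on `ℤ^{1,6}`: `⟨x,y⟩ = x₀y₀ - ∑_{i=1}^{6} xᵢyᵢ`. -/
def form (x y : Fin 7 → ℤ) : ℤ := 2 * (x 0 * y 0) - ∑ i, x i * y i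

/-- The standard basis vector `f i` of `V = ℤ⁷`. -/
def fvec (i : Fin 7) : Fin 7 → ℤ := fun j => if j = i then 1 else 0

/-- The canonical vector `k = -3f₀ + f₁ + ⋯ + f₆`. -/
def kvec : Fin 7 → ℤ := fun i => if i = 0 then -3 else 1

/-- A root of the `E₆` lattice: a vector `r` with `⟨r,k⟩ = 0` and `⟨r,r⟩ = -2`. -/
def IsRoot (r : Fin 7 → ℤ) : Prop := form r kvec = 0 ∧ form r r = -2

/-- An exceptional vector: a vector `ℓ` with `⟨ℓ,ℓ⟩ = -1` and `⟨ℓ,k⟩ = -1`. -/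
def IsExc (l : Fin 7 → ℤ) : Prop := form l l = -1 ∧ form l kvec = -1

/-- The list of the `27` exceptional vectors. -/
def excList : List (Fin 7 → ℤ) :=
[![0, 1, 0, 0, 0, 0, 0],
![0, 0, 1, 0, 0, 0, 0],
![0, 0, 0, 1, 0, 0, 0],
![0, 0, 0, 0, 1, 0, 0],
![0, 0, 0, 0, 0, 1, 0],
![0, 0, 0, 0, 0, 0, 1],
![1, -1, -1, 0, 0, 0, 0],
![1, -1, 0, -1, 0, 0, 0],
![1, -1, 0, 0, -1, 0, 0],
![1, -1, 0, 0, 0, -1, 0],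
![1, -1, 0, 0, 0, 0, -1],
![1, 0, -1, -1, 0, 0, 0],
![1, 0, -1, 0, -1, 0, 0],
![1, 0, -1, 0, 0, -1, 0],
![1, 0, -1, 0, 0, 0, -1],
![1, 0, 0, -1, -1, 0, 0],
![1, 0, 0, -1, 0, -1, 0],
![1, 0, 0, -1, 0, 0, -1],
![1, 0, 0, 0, -1, -1, 0],
![1, 0, 0, 0, -1, 0, -1],
![1, 0, 0, 0, 0, -1, -1],
![2, 0, -1, -1, -1, -1, -1],
![2, -1, 0, -1, -1, -1, -1],
![2, -1, -1, 0, -1, -1, -1],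
![2, -1, -1, -1, 0, -1, -1],
![2, -1, -1, -1, -1, 0, -1],
![2, -1, -1, -1, -1, -1, 0]]

lemma form_eq (x y : Fin 7 → ℤ) : form x y =
    x 0 * y 0 - (x 1 * y 1 + x 2 * y 2 + x 3 * y 3 + x 4 * y 4 + x 5 * y 5 + x 6 * y 6) := by
  rw [form, Fin.sum_univ_seven]; ring

lemma form_kvec (x : Fin 7 → ℤ) : form x kvec =
    -3 * x 0 - (x 1 + x 2 + x 3 + x 4 + x 5 + x 6) := by
  have h : ∀ i : Fin 7, kvec i = if i = 0 then -3 else 1 := fun _ => rfl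
  rw [form, Fin.sum_univ_seven]
  rw [h 0, h 1, h 2, h 3, h 4, h 5, h 6]
  rw [if_pos rfl, if_neg (by decide), if_neg (by decide), if_neg (by decide),
    if_neg (by decide), if_neg (by decide), if_neg (by decide)]
  ring

lemma self_le_sq (b : ℤ) : b ≤ b * b := by
  rcases le_or_gt b 0 with h | h
  · exact h.trans (mul_self_nonneg b)
  · nlinarith

lemma exc_mem {l : Fin 7 → ℤ} (hl : IsExc l) : l ∈ excList := by
  obtain ⟨h1, h2⟩ := hl
  rw [form_eq] at h1
  rw [form_kvec] at h2
  obtain ⟨a, ha⟩ : ∃ a, l 0 = a := ⟨_, rfl⟩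
  obtain ⟨b1, hb1⟩ : ∃ b, l 1 = b := ⟨_, rfl⟩
  obtain ⟨b2, hb2⟩ : ∃ b, l 2 = b := ⟨_, rfl⟩
  obtain ⟨b3, hb3⟩ : ∃ b, l 3 = b := ⟨_, rfl⟩
  obtain ⟨b4, hb4⟩ : ∃ b, l 4 = b := ⟨_, rfl⟩
  obtain ⟨b5, hb5⟩ : ∃ b, l 5 = b := ⟨_, rfl⟩
  obtain ⟨b6, hb6⟩ : ∃ b, l 6 = b := ⟨_, rfl⟩
  rw [ha, hb1, hb2, hb3, hb4, hb5, hb6] at h1 h2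
  have hl : l = ![a, b1, b2, b3, b4, b5, b6] := by
    funext i; fin_cases i <;> assumption
  rw [hl]; clear hl ha hb1 hb2 hb3 hb4 hb5 hb6
  have hcs : (b1 + b2 + b3 + b4 + b5 + b6) * (b1 + b2 + b3 + b4 + b5 + b6) ≤
      6 * (b1*b1 + b2*b2 + b3*b3 + b4*b4 + b5*b5 + b6*b6) := by
    nlinarith [sq_nonneg (b1-b2), sq_nonneg (b1-b3), sq_nonneg (b1-b4), sq_nonneg (b1-b5),
      sq_nonneg (b1-b6), sq_nonneg (b2-b3), sq_nonneg (b2-b4), sq_nonneg (b2-b5),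
      sq_nonneg (b2-b6), sq_nonneg (b3-b4), sq_nonneg (b3-b5), sq_nonneg (b3-b6),
      sq_nonneg (b4-b5), sq_nonneg (b4-b6), sq_nonneg (b5-b6)]
  have ha0 : 0 ≤ a := by nlinarith [sq_nonneg a]
  have ha2 : a ≤ 2 := by nlinarith [sq_nonneg (a - 3)]
  interval_cases a
  · -- a = 0 : each bᵢ ∈ {0,1}
    have e1 : b1 * b1 = b1 := by
      linarith [self_le_sq b1, self_le_sq b2, self_le_sq b3, self_le_sq b4,
        self_le_sq b5, self_le_sq b6]
    have e2 : b2 * b2 = b2 := by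
      linarith [self_le_sq b1, self_le_sq b2, self_le_sq b3, self_le_sq b4,
        self_le_sq b5, self_le_sq b6]
    have e3 : b3 * b3 = b3 := by
      linarith [self_le_sq b1, self_le_sq b2, self_le_sq b3, self_le_sq b4,
        self_le_sq b5, self_le_sq b6]
    have e4 : b4 * b4 = b4 := by
      linarith [self_le_sq b1, self_le_sq b2, self_le_sq b3, self_le_sq b4,
        self_le_sq b5, self_le_sq b6]
    have e5 : b5 * b5 = b5 := by
      linarith [self_le_sq b1, self_le_sq b2, self_le_sq b3, self_le_sq b4,
        self_le_sq b5, self_le_sq b6]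
    have e6 : b6 * b6 = b6 := by
      linarith [self_le_sq b1, self_le_sq b2, self_le_sq b3, self_le_sq b4,
        self_le_sq b5, self_le_sq b6]
    have d1 : b1 = 0 ∨ b1 = 1 := by
      rcases mul_eq_zero.mp (show b1 * (b1 - 1) = 0 by linear_combination e1) with h | h
      exacts [Or.inl h, Or.inr (by linarith)]
    have d2 : b2 = 0 ∨ b2 = 1 := by
      rcases mul_eq_zero.mp (show b2 * (b2 - 1) = 0 by linear_combination e2) with h | h
      exacts [Or.inl h, Or.inr (by linarith)]
    have d3 : b3 = 0 ∨ b3 = 1 := by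
      rcases mul_eq_zero.mp (show b3 * (b3 - 1) = 0 by linear_combination e3) with h | h
      exacts [Or.inl h, Or.inr (by linarith)]
    have d4 : b4 = 0 ∨ b4 = 1 := by
      rcases mul_eq_zero.mp (show b4 * (b4 - 1) = 0 by linear_combination e4) with h | h
      exacts [Or.inl h, Or.inr (by linarith)]
    have d5 : b5 = 0 ∨ b5 = 1 := by
      rcases mul_eq_zero.mp (show b5 * (b5 - 1) = 0 by linear_combination e5) with h | h
      exacts [Or.inl h, Or.inr (by linarith)]
    have d6 : b6 = 0 ∨ b6 = 1 := by
      rcases mul_eq_zero.mp (show b6 * (b6 - 1) = 0 by linear_combination e6) with h | h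
      exacts [Or.inl h, Or.inr (by linarith)]
    clear e1 e2 e3 e4 e5 e6 h1 hcs
    rcases d1 with rfl | rfl <;> rcases d2 with rfl | rfl <;> rcases d3 with rfl | rfl <;>
      rcases d4 with rfl | rfl <;> rcases d5 with rfl | rfl <;> rcases d6 with rfl | rfl <;>
      first | omega | decide
  all_goals {
    -- a = 1 or a = 2 : each bᵢ ∈ {-1,0}
    have e1 : b1 * b1 = -b1 := by
      linarith [self_le_sq (-b1), self_le_sq (-b2), self_le_sq (-b3), self_le_sq (-b4),
        self_le_sq (-b5), self_le_sq (-b6)]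
    have e2 : b2 * b2 = -b2 := by
      linarith [self_le_sq (-b1), self_le_sq (-b2), self_le_sq (-b3), self_le_sq (-b4),
        self_le_sq (-b5), self_le_sq (-b6)]
    have e3 : b3 * b3 = -b3 := by
      linarith [self_le_sq (-b1), self_le_sq (-b2), self_le_sq (-b3), self_le_sq (-b4),
        self_le_sq (-b5), self_le_sq (-b6)]
    have e4 : b4 * b4 = -b4 := by
      linarith [self_le_sq (-b1), self_le_sq (-b2), self_le_sq (-b3), self_le_sq (-b4),
        self_le_sq (-b5), self_le_sq (-b6)]
    have e5 : b5 * b5 = -b5 := by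
      linarith [self_le_sq (-b1), self_le_sq (-b2), self_le_sq (-b3), self_le_sq (-b4),
        self_le_sq (-b5), self_le_sq (-b6)]
    have e6 : b6 * b6 = -b6 := by
      linarith [self_le_sq (-b1), self_le_sq (-b2), self_le_sq (-b3), self_le_sq (-b4),
        self_le_sq (-b5), self_le_sq (-b6)]
    have d1 : b1 = 0 ∨ b1 = -1 := by
      rcases mul_eq_zero.mp (show b1 * (b1 + 1) = 0 by linear_combination e1) with h | h
      exacts [Or.inl h, Or.inr (by linarith)]
    have d2 : b2 = 0 ∨ b2 = -1 := by
      rcases mul_eq_zero.mp (show b2 * (b2 + 1) = 0 by linear_combination e2) with h | h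
      exacts [Or.inl h, Or.inr (by linarith)]
    have d3 : b3 = 0 ∨ b3 = -1 := by
      rcases mul_eq_zero.mp (show b3 * (b3 + 1) = 0 by linear_combination e3) with h | h
      exacts [Or.inl h, Or.inr (by linarith)]
    have d4 : b4 = 0 ∨ b4 = -1 := by
      rcases mul_eq_zero.mp (show b4 * (b4 + 1) = 0 by linear_combination e4) with h | h
      exacts [Or.inl h, Or.inr (by linarith)]
    have d5 : b5 = 0 ∨ b5 = -1 := by
      rcases mul_eq_zero.mp (show b5 * (b5 + 1) = 0 by linear_combination e5) with h | h
      exacts [Or.inl h, Or.inr (by linarith)]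
    have d6 : b6 = 0 ∨ b6 = -1 := by
      rcases mul_eq_zero.mp (show b6 * (b6 + 1) = 0 by linear_combination e6) with h | h
      exacts [Or.inl h, Or.inr (by linarith)]
    clear e1 e2 e3 e4 e5 e6 h1 hcs
    rcases d1 with rfl | rfl <;> rcases d2 with rfl | rfl <;> rcases d3 with rfl | rfl <;>
      rcases d4 with rfl | rfl <;> rcases d5 with rfl | rfl <;> rcases d6 with rfl | rfl <;>
      first | omega | decide }

instance : DecidablePred IsExc :=
  fun l => inferInstanceAs (Decidable (form l l = -1 ∧ form l kvec = -1))

lemma mem_exc : ∀ l ∈ excList, IsExc l := by decide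

/-- Any two distinct exceptional vectors pair to `0` or `1`, and every exceptional vector
is incident (pairing `1`) to exactly `10` exceptional vectors. -/
theorem stmt_4 :
    (∀ l l' : Fin 7 → ℤ, IsExc l → IsExc l' → l ≠ l' →
      form l l' = 0 ∨ form l l' = 1) ∧
    (∀ l : Fin 7 → ℤ, IsExc l →
      {l' : Fin 7 → ℤ | IsExc l' ∧ form l l' = 1}.ncard = 10) := by
  constructor
  · intro l l' hl hl' hne
    exact (by decide : ∀ l ∈ excList, ∀ l' ∈ excList, l ≠ l' →
      form l l' = 0 ∨ form l l' = 1) l (exc_mem hl) l' (exc_mem hl') hne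
  · intro l hl
    have hset : {l' : Fin 7 → ℤ | IsExc l' ∧ form l l' = 1} =
        ↑((excList.filter (fun l' => form l l' = 1)).toFinset) := by
      ext l'
      simp only [Set.mem_setOf_eq, Finset.coe_sort_coe, List.coe_toFinset, Set.mem_setOf_eq,
        List.mem_filter, decide_eq_true_eq]
      exact ⟨fun ⟨h1, h2⟩ => ⟨exc_mem h1, h2⟩, fun ⟨h1, h2⟩ => ⟨mem_exc _ h1, h2⟩⟩
    rw [hset, Set.ncard_coe_finset]
    exact (by decide : ∀ l ∈ excList,
      ((excList.filter (fun l' => form l l' = 1)).toFinset).card = 10) l (exc_mem hl)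
end

section
/- If $\ell,\ell'$ are exceptional vectors with $\langle\ell,\ell'\rangle=1$, then $\ell'':=-k-\ell-\ell'$ is again an exceptional vector and $\langle\ell,\ell''\rangle=\langle\ell',\ell''\rangle=1$. Consequently, for each exceptional vector $\ell$, the $10$ exceptional vectors incident to $\ell$ fall into $5$ pairs $(\ell',\ell'')$ with $\ell+\ell'+\ell''=-k$ (corresponding to the five triangles $\ell+\ell_i+\ell_i'\in|-K_S|$ through a line on a cubic surface). -/
abbrev Tup := ℤ × ℤ × ℤ × ℤ × ℤ × ℤ × ℤ

set_option synthInstance.maxSize 1000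

lemma kv0 : kvec 0 = -3 := rfl
lemma kv1 : kvec 1 = 1 := rfl
lemma kv2 : kvec 2 = 1 := rfl
lemma kv3 : kvec 3 = 1 := rfl
lemma kv4 : kvec 4 = 1 := rfl
lemma kv5 : kvec 5 = 1 := rfl
lemma kv6 : kvec 6 = 1 := rfl

def tv (t : Tup) : Fin 7 → ℤ := fun j =>
  if j = 0 then t.1 else if j = 1 then t.2.1 else if j = 2 then t.2.2.1
  else if j = 3 then t.2.2.2.1 else if j = 4 then t.2.2.2.2.1
  else if j = 5 then t.2.2.2.2.2.1 else t.2.2.2.2.2.2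

def formT (t s : Tup) : ℤ :=
  2 * (t.1 * s.1) - (t.1 * s.1 + t.2.1 * s.2.1 + t.2.2.1 * s.2.2.1 + t.2.2.2.1 * s.2.2.2.1
    + t.2.2.2.2.1 * s.2.2.2.2.1 + t.2.2.2.2.2.1 * s.2.2.2.2.2.1 + t.2.2.2.2.2.2 * s.2.2.2.2.2.2)

def excTuples : List Tup := [
  (0, 1, 0, 0, 0, 0, 0),
  (0, 0, 1, 0, 0, 0, 0),
  (0, 0, 0, 1, 0, 0, 0),
  (0, 0, 0, 0, 1, 0, 0),
  (0, 0, 0, 0, 0, 1, 0),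
  (0, 0, 0, 0, 0, 0, 1),
  (1, -1, -1, 0, 0, 0, 0),
  (1, -1, 0, -1, 0, 0, 0),
  (1, -1, 0, 0, -1, 0, 0),
  (1, -1, 0, 0, 0, -1, 0),
  (1, -1, 0, 0, 0, 0, -1),
  (1, 0, -1, -1, 0, 0, 0),
  (1, 0, -1, 0, -1, 0, 0),
  (1, 0, -1, 0, 0, -1, 0),
  (1, 0, -1, 0, 0, 0, -1),
  (1, 0, 0, -1, -1, 0, 0),
  (1, 0, 0, -1, 0, -1, 0),
  (1, 0, 0, -1, 0, 0, -1),
  (1, 0, 0, 0, -1, -1, 0),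
  (1, 0, 0, 0, -1, 0, -1),
  (1, 0, 0, 0, 0, -1, -1),
  (2, 0, -1, -1, -1, -1, -1),
  (2, -1, 0, -1, -1, -1, -1),
  (2, -1, -1, 0, -1, -1, -1),
  (2, -1, -1, -1, 0, -1, -1),
  (2, -1, -1, -1, -1, 0, -1),
  (2, -1, -1, -1, -1, -1, 0)]

lemma form_tv (t s : Tup) : form (tv t) (tv s) = formT t s := by
  simp [form, tv, formT, Fin.sum_univ_seven]

lemma kvec_eq_tv : kvec = tv (-3, 1, 1, 1, 1, 1, 1) := by
  funext i; fin_cases i <;> rfl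

lemma tv_inj : Function.Injective tv := by
  intro t s h
  have h0 := congrFun h 0
  have h1 := congrFun h 1
  have h2 := congrFun h 2
  have h3 := congrFun h 3
  have h4 := congrFun h 4
  have h5 := congrFun h 5
  have h6 := congrFun h 6
  simp [tv] at h0 h1 h2 h3 h4 h5 h6
  obtain ⟨a, b, c, d, e, f, g⟩ := t
  obtain ⟨a', b', c', d', e', f', g'⟩ := s
  simp_all [Prod.ext_iff]

lemma eq_tv_self (m : Fin 7 → ℤ) : m = tv (m 0, m 1, m 2, m 3, m 4, m 5, m 6) := by
  funext i; fin_cases i <;> rfl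

lemma int_le_sq (x : ℤ) : x ≤ x ^ 2 := by nlinarith [sq_nonneg x, sq_nonneg (x - 1)]

lemma int_neg_le_sq (x : ℤ) : -x ≤ x ^ 2 := by nlinarith [sq_nonneg x, sq_nonneg (x + 1)]

lemma sq_eq_self (x : ℤ) (h : x ^ 2 = x) : x = 0 ∨ x = 1 := by
  have := mul_eq_zero.mp (show x * (x - 1) = 0 by nlinarith)
  omega

lemma sq_eq_neg_self (x : ℤ) (h : x ^ 2 = -x) : x = 0 ∨ x = -1 := by
  have := mul_eq_zero.mp (show x * (x + 1) = 0 by nlinarith)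
  omega

set_option maxHeartbeats 1000000 in
lemma classify (m : Fin 7 → ℤ) (hm : IsExc m) :
    (m 0, m 1, m 2, m 3, m 4, m 5, m 6) ∈ excTuples := by
  obtain ⟨h1, h2⟩ := hm
  simp only [form, kv0, kv1, kv2, kv3, kv4, kv5, kv6, Fin.sum_univ_seven] at h1 h2
  set a := m 0 with ha
  set b := m 1 with hb
  set c := m 2 with hc
  set d := m 3 with hd
  set e := m 4 with he
  set f := m 5 with hf
  set g := m 6 with hg
  clear_value a b c d e f g
  clear ha hb hc hd he hf hg
  have hQ : b ^ 2 + c ^ 2 + d ^ 2 + e ^ 2 + f ^ 2 + g ^ 2 = a ^ 2 + 1 := by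
    linear_combination -h1
  have hS : b + c + d + e + f + g = 1 - 3 * a := by linarith [h2]
  have iden : 6 * (b ^ 2 + c ^ 2 + d ^ 2 + e ^ 2 + f ^ 2 + g ^ 2)
      - (b + c + d + e + f + g) ^ 2 =
      (b - c) ^ 2 + (b - d) ^ 2 + (b - e) ^ 2 + (b - f) ^ 2 + (b - g) ^ 2
      + (c - d) ^ 2 + (c - e) ^ 2 + (c - f) ^ 2 + (c - g) ^ 2
      + (d - e) ^ 2 + (d - f) ^ 2 + (d - g) ^ 2
      + (e - f) ^ 2 + (e - g) ^ 2 + (f - g) ^ 2 := by ring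
  have cs : (b + c + d + e + f + g) ^ 2 ≤
      6 * (b ^ 2 + c ^ 2 + d ^ 2 + e ^ 2 + f ^ 2 + g ^ 2) := by
    linarith [iden, sq_nonneg (b - c), sq_nonneg (b - d), sq_nonneg (b - e), sq_nonneg (b - f),
      sq_nonneg (b - g), sq_nonneg (c - d), sq_nonneg (c - e), sq_nonneg (c - f),
      sq_nonneg (c - g), sq_nonneg (d - e), sq_nonneg (d - f), sq_nonneg (d - g),
      sq_nonneg (e - f), sq_nonneg (e - g), sq_nonneg (f - g)]
  have cs2 : (1 - 3 * a) ^ 2 ≤ 6 * (a ^ 2 + 1) := by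
    rw [← hS]; linarith [cs, hQ]
  have hbound : 3 * a ^ 2 - 6 * a - 5 ≤ 0 := by nlinarith [cs2]
  have ha0 : 0 ≤ a := by nlinarith [sq_nonneg (a + 1)]
  have ha2 : a ≤ 2 := by nlinarith [sq_nonneg (a - 3)]
  simp only [excTuples, List.mem_cons, List.not_mem_nil, or_false, Prod.mk.injEq]
  interval_cases a
  · have eb : b ^ 2 = b := by
      linarith [int_le_sq b, int_le_sq c, int_le_sq d, int_le_sq e, int_le_sq f, int_le_sq g]
    have ec : c ^ 2 = c := by
      linarith [int_le_sq b, int_le_sq c, int_le_sq d, int_le_sq e, int_le_sq f, int_le_sq g]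
    have ed : d ^ 2 = d := by
      linarith [int_le_sq b, int_le_sq c, int_le_sq d, int_le_sq e, int_le_sq f, int_le_sq g]
    have ee : e ^ 2 = e := by
      linarith [int_le_sq b, int_le_sq c, int_le_sq d, int_le_sq e, int_le_sq f, int_le_sq g]
    have ef : f ^ 2 = f := by
      linarith [int_le_sq b, int_le_sq c, int_le_sq d, int_le_sq e, int_le_sq f, int_le_sq g]
    have eg : g ^ 2 = g := by
      linarith [int_le_sq b, int_le_sq c, int_le_sq d, int_le_sq e, int_le_sq f, int_le_sq g]
    have hb1 := sq_eq_self b eb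
    have hc1 := sq_eq_self c ec
    have hd1 := sq_eq_self d ed
    have he1 := sq_eq_self e ee
    have hf1 := sq_eq_self f ef
    have hg1 := sq_eq_self g eg
    rcases hb1 with rfl|rfl <;> rcases hc1 with rfl|rfl <;> rcases hd1 with rfl|rfl <;>
      rcases he1 with rfl|rfl <;> rcases hf1 with rfl|rfl <;> rcases hg1 with rfl|rfl <;>
      first | (exact absurd hS (by decide)) | decide
  · have eb : b ^ 2 = -b := by
      linarith [int_neg_le_sq b, int_neg_le_sq c, int_neg_le_sq d, int_neg_le_sq e, int_neg_le_sq f, int_neg_le_sq g]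
    have ec : c ^ 2 = -c := by
      linarith [int_neg_le_sq b, int_neg_le_sq c, int_neg_le_sq d, int_neg_le_sq e, int_neg_le_sq f, int_neg_le_sq g]
    have ed : d ^ 2 = -d := by
      linarith [int_neg_le_sq b, int_neg_le_sq c, int_neg_le_sq d, int_neg_le_sq e, int_neg_le_sq f, int_neg_le_sq g]
    have ee : e ^ 2 = -e := by
      linarith [int_neg_le_sq b, int_neg_le_sq c, int_neg_le_sq d, int_neg_le_sq e, int_neg_le_sq f, int_neg_le_sq g]
    have ef : f ^ 2 = -f := by
      linarith [int_neg_le_sq b, int_neg_le_sq c, int_neg_le_sq d, int_neg_le_sq e, int_neg_le_sq f, int_neg_le_sq g]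
    have eg : g ^ 2 = -g := by
      linarith [int_neg_le_sq b, int_neg_le_sq c, int_neg_le_sq d, int_neg_le_sq e, int_neg_le_sq f, int_neg_le_sq g]
    have hb1 := sq_eq_neg_self b eb
    have hc1 := sq_eq_neg_self c ec
    have hd1 := sq_eq_neg_self d ed
    have he1 := sq_eq_neg_self e ee
    have hf1 := sq_eq_neg_self f ef
    have hg1 := sq_eq_neg_self g eg
    rcases hb1 with rfl|rfl <;> rcases hc1 with rfl|rfl <;> rcases hd1 with rfl|rfl <;>
      rcases he1 with rfl|rfl <;> rcases hf1 with rfl|rfl <;> rcases hg1 with rfl|rfl <;>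
      first | (exact absurd hS (by decide)) | decide
  · have eb : b ^ 2 = -b := by
      linarith [int_neg_le_sq b, int_neg_le_sq c, int_neg_le_sq d, int_neg_le_sq e, int_neg_le_sq f, int_neg_le_sq g]
    have ec : c ^ 2 = -c := by
      linarith [int_neg_le_sq b, int_neg_le_sq c, int_neg_le_sq d, int_neg_le_sq e, int_neg_le_sq f, int_neg_le_sq g]
    have ed : d ^ 2 = -d := by
      linarith [int_neg_le_sq b, int_neg_le_sq c, int_neg_le_sq d, int_neg_le_sq e, int_neg_le_sq f, int_neg_le_sq g]
    have ee : e ^ 2 = -e := by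
      linarith [int_neg_le_sq b, int_neg_le_sq c, int_neg_le_sq d, int_neg_le_sq e, int_neg_le_sq f, int_neg_le_sq g]
    have ef : f ^ 2 = -f := by
      linarith [int_neg_le_sq b, int_neg_le_sq c, int_neg_le_sq d, int_neg_le_sq e, int_neg_le_sq f, int_neg_le_sq g]
    have eg : g ^ 2 = -g := by
      linarith [int_neg_le_sq b, int_neg_le_sq c, int_neg_le_sq d, int_neg_le_sq e, int_neg_le_sq f, int_neg_le_sq g]
    have hb1 := sq_eq_neg_self b eb
    have hc1 := sq_eq_neg_self c ec
    have hd1 := sq_eq_neg_self d ed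
    have he1 := sq_eq_neg_self e ee
    have hf1 := sq_eq_neg_self f ef
    have hg1 := sq_eq_neg_self g eg
    rcases hb1 with rfl|rfl <;> rcases hc1 with rfl|rfl <;> rcases hd1 with rfl|rfl <;>
      rcases he1 with rfl|rfl <;> rcases hf1 with rfl|rfl <;> rcases hg1 with rfl|rfl <;>
      first | (exact absurd hS (by decide)) | decide

lemma exc_of_mem : ∀ t ∈ excTuples, IsExc (tv t) := by
  intro t ht
  constructor
  · rw [form_tv]
    revert ht; revert t; decide
  · rw [kvec_eq_tv, form_tv]
    revert ht; revert t; decide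

lemma count10 : ∀ t ∈ excTuples,
    (excTuples.toFinset.filter (fun s => formT t s = 1)).card = 10 := by decide


/-- If `ℓ, ℓ'` are incident exceptional vectors, then `ℓ'' = -k - ℓ - ℓ'` is again an
exceptional vector, incident to both `ℓ` and `ℓ'`; moreover `ℓ' ↦ -k - ℓ - ℓ'` is a
fixed-point-free involution of the set of the `10` exceptional vectors incident to `ℓ`,
so these fall into `5` pairs `(ℓ', ℓ'')` with `ℓ + ℓ' + ℓ'' = -k`. -/
theorem stmt_15 (l l' : Fin 7 → ℤ) (hl : IsExc l) (hl' : IsExc l')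
    (h : form l l' = 1) :
    IsExc (-kvec - l - l') ∧
    form l (-kvec - l - l') = 1 ∧
    form l' (-kvec - l - l') = 1 ∧
    -kvec - l - l' ≠ l' ∧
    -kvec - l - (-kvec - l - l') = l' ∧
    {m : Fin 7 → ℤ | IsExc m ∧ form l m = 1}.ncard = 10 := by
  obtain ⟨hl1, hl2⟩ := hl
  obtain ⟨hl'1, hl'2⟩ := hl'
  have hexp1 : form (-kvec - l - l') (-kvec - l - l') = -1 := by
    simp only [form, kv0, kv1, kv2, kv3, kv4, kv5, kv6, Fin.sum_univ_seven, Pi.sub_apply,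
      Pi.neg_apply] at hl1 hl2 hl'1 hl'2 h ⊢
    linear_combination hl1 + hl'1 + 2 * hl2 + 2 * hl'2 + 2 * h
  have hexp2 : form (-kvec - l - l') kvec = -1 := by
    simp only [form, kv0, kv1, kv2, kv3, kv4, kv5, kv6, Fin.sum_univ_seven, Pi.sub_apply,
      Pi.neg_apply] at hl2 hl'2 ⊢
    linear_combination -hl2 - hl'2
  have hexp3 : form l (-kvec - l - l') = 1 := by
    simp only [form, kv0, kv1, kv2, kv3, kv4, kv5, kv6, Fin.sum_univ_seven, Pi.sub_apply,
      Pi.neg_apply] at hl1 hl2 h ⊢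
    linear_combination -hl2 - hl1 - h
  have hexp4 : form l' (-kvec - l - l') = 1 := by
    simp only [form, kv0, kv1, kv2, kv3, kv4, kv5, kv6, Fin.sum_univ_seven, Pi.sub_apply,
      Pi.neg_apply] at hl'1 hl'2 h ⊢
    linear_combination -hl'2 - hl'1 - h
  refine ⟨⟨hexp1, hexp2⟩, hexp3, hexp4, ?_, ?_, ?_⟩
  · intro heq
    rw [heq] at hexp4
    omega
  · funext i
    simp only [Pi.sub_apply, Pi.neg_apply]
    ring
  · have hcl := classify l ⟨hl1, hl2⟩
    set t := (l 0, l 1, l 2, l 3, l 4, l 5, l 6) with ht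
    have hltv : l = tv t := eq_tv_self l
    have hset : {m : Fin 7 → ℤ | IsExc m ∧ form l m = 1} =
        ↑((excTuples.toFinset.filter (fun s => formT t s = 1)).image tv) := by
      ext m
      simp only [Set.mem_setOf_eq, Finset.coe_image, Set.mem_image, Finset.mem_coe,
        Finset.mem_filter, List.mem_toFinset]
      constructor
      · rintro ⟨hm, hfm⟩
        refine ⟨(m 0, m 1, m 2, m 3, m 4, m 5, m 6), ⟨classify m hm, ?_⟩, (eq_tv_self m).symm⟩
        rw [← form_tv, ← eq_tv_self m, ← hltv]
        exact hfm
      · rintro ⟨s, ⟨hs, hfs⟩, rfl⟩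
        refine ⟨exc_of_mem s hs, ?_⟩
        rw [hltv, form_tv]
        exact hfs
    rw [hset, Set.ncard_coe_finset, Finset.card_image_of_injective _ tv_inj]
    exact count10 t hcl
end

section
/- The action of the Weyl group $W(E_6)$ on the set $L$ of $27$ exceptional vectors is faithful: if $w\in W(E_6)$ satisfies $w(\ell)=\ell$ for every exceptional vector $\ell$, then $w$ is the identity of $V$. Hence the action gives a natural embedding $W(E_6)\hookrightarrow S_{27}$ of the Weyl group into the symmetric group on the $27$ exceptional vectors. -/
/-- The reflection in a root `r`, as a plain function: `x ↦ x + ⟨x,r⟩ r`. -/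
def reflFun (r : Fin 7 → ℤ) (x : Fin 7 → ℤ) : Fin 7 → ℤ := x + form x r • r

lemma form_add_left (x y z : Fin 7 → ℤ) : form (x + y) z = form x z + form y z := by
  simp only [form, Pi.add_apply, add_mul, Finset.sum_add_distrib]
  ring

lemma form_smul_left (c : ℤ) (x y : Fin 7 → ℤ) : form (c • x) y = c * form x y := by
  simp only [form, Pi.smul_apply, smul_eq_mul, mul_assoc, ← Finset.mul_sum]
  ring

/-- The reflection in a root `r`, as a linear map. -/
def reflL (r : Fin 7 → ℤ) : (Fin 7 → ℤ) →ₗ[ℤ] (Fin 7 → ℤ) where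
  toFun := reflFun r
  map_add' x y := by
    simp only [reflFun, form_add_left, add_smul]
    abel
  map_smul' c x := by
    simp only [reflFun, form_smul_left, mul_smul, RingHom.id_apply, smul_add]

lemma reflFun_invol (r : Fin 7 → ℤ) (hr : IsRoot r) (x : Fin 7 → ℤ) :
    reflFun r (reflFun r x) = x := by
  have h : form (x + form x r • r) r = -form x r := by
    rw [form_add_left, form_smul_left, hr.2]; ring
  unfold reflFun
  rw [h, neg_smul]
  abel

/-- The reflection in a root `r`, as a linear automorphism of `ℤ^{1,6}`. -/
def reflEquiv (r : Fin 7 → ℤ) (hr : IsRoot r) : (Fin 7 → ℤ) ≃ₗ[ℤ] (Fin 7 → ℤ) :=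
  LinearEquiv.ofLinear (reflL r) (reflL r)
    (LinearMap.ext fun x => reflFun_invol r hr x)
    (LinearMap.ext fun x => reflFun_invol r hr x)

/-- The Weyl group `W(E₆)`: the subgroup of `GL(ℤ^{1,6})` generated by the reflections
in the roots of the `E₆` lattice. -/
def WE6 : Subgroup ((Fin 7 → ℤ) ≃ₗ[ℤ] (Fin 7 → ℤ)) :=
  Subgroup.closure {g | ∃ r, ∃ hr : IsRoot r, g = reflEquiv r hr}

lemma form_comm (x y : Fin 7 → ℤ) : form x y = form y x := by
  unfold form
  rw [Finset.sum_congr rfl (fun i _ => mul_comm (x i) (y i))]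
  ring

lemma form_add_right (x y z : Fin 7 → ℤ) : form x (y + z) = form x y + form x z := by
  rw [form_comm, form_add_left, form_comm y x, form_comm z x]

lemma form_smul_right (c : ℤ) (x y : Fin 7 → ℤ) : form x (c • y) = c * form x y := by
  rw [form_comm, form_smul_left, form_comm]

/-- Predicate: `g` preserves the form and fixes `k`. -/
def Pres (g : (Fin 7 → ℤ) ≃ₗ[ℤ] (Fin 7 → ℤ)) : Prop :=
  (∀ x y, form (g x) (g y) = form x y) ∧ g kvec = kvec

lemma reflEquiv_apply (r : Fin 7 → ℤ) (hr : IsRoot r) (x : Fin 7 → ℤ) :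
    reflEquiv r hr x = reflFun r x := rfl

lemma refl_pres (r : Fin 7 → ℤ) (hr : IsRoot r) : Pres (reflEquiv r hr) := by
  constructor
  · intro x y
    simp only [reflEquiv_apply, reflFun, form_add_left, form_add_right, form_smul_left,
      form_smul_right, hr.2]
    rw [form_comm r y]
    ring
  · simp only [reflEquiv_apply, reflFun]
    rw [form_comm, hr.1, zero_smul, add_zero]

lemma we6_pres : ∀ w ∈ WE6, Pres w := by
  intro w hw
  refine Subgroup.closure_induction (p := fun g _ => Pres g) ?_ ?_ ?_ ?_ hw
  · rintro g ⟨r, hr, rfl⟩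
    exact refl_pres r hr
  · exact ⟨fun x y => rfl, rfl⟩
  · rintro g h _ _ ⟨hg1, hg2⟩ ⟨hh1, hh2⟩
    refine ⟨fun x y => ?_, ?_⟩
    · have : ∀ z, (g * h) z = g (h z) := fun z => rfl
      rw [this, this, hg1, hh1]
    · show g (h kvec) = kvec
      rw [hh2, hg2]
  · rintro g hg ⟨hg1, hg2⟩
    have happ : ∀ z, g (g⁻¹ z) = z := fun z => by
      have : (g * g⁻¹) z = z := by rw [mul_inv_cancel]; rfl
      exact this
    refine ⟨fun x y => ?_, ?_⟩
    · conv_rhs => rw [← happ x, ← happ y, hg1]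
    · have happ' : ∀ z, g⁻¹ (g z) = z := fun z => by
        have : (g⁻¹ * g) z = z := by rw [inv_mul_cancel]; rfl
        exact this
      calc g⁻¹ kvec = g⁻¹ (g kvec) := by rw [hg2]
        _ = kvec := happ' _

lemma pres_exc {g : (Fin 7 → ℤ) ≃ₗ[ℤ] (Fin 7 → ℤ)} (hg : Pres g)
    {l : Fin 7 → ℤ} (hl : IsExc l) : IsExc (g l) := by
  refine ⟨?_, ?_⟩
  · rw [hg.1 l l]; exact hl.1
  · rw [← hg.2, hg.1]; exact hl.2

lemma decomp (x : Fin 7 → ℤ) : x = ∑ i, x i • fvec i := by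
  funext j
  simp [fvec, Finset.sum_apply, Finset.sum_ite_eq]

lemma fix_exc_eq_one (w : (Fin 7 → ℤ) ≃ₗ[ℤ] (Fin 7 → ℤ))
    (hfix : ∀ l : Fin 7 → ℤ, IsExc l → w l = l) : w = 1 := by
  have h1 : ∀ i : Fin 7, i ≠ 0 → w (fvec i) = fvec i := by
    intro i hi
    apply hfix
    fin_cases i
    · exact absurd rfl hi
    · exact ⟨by decide, by decide⟩
    · exact ⟨by decide, by decide⟩
    · exact ⟨by decide, by decide⟩
    · exact ⟨by decide, by decide⟩
    · exact ⟨by decide, by decide⟩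
    · exact ⟨by decide, by decide⟩
  have h0 : w (fvec 0) = fvec 0 := by
    have hl : w (fvec 0 - fvec 1 - fvec 2) = fvec 0 - fvec 1 - fvec 2 :=
      hfix _ ⟨by decide, by decide⟩
    have key : fvec 0 = (fvec 0 - fvec 1 - fvec 2) + fvec 1 + fvec 2 := by decide
    rw [key, map_add, map_add, hl, h1 1 (by decide), h1 2 (by decide)]
  have hall : ∀ i, w (fvec i) = fvec i := by
    intro i
    by_cases hi : i = 0
    · rw [hi]; exact h0
    · exact h1 i hi
  apply LinearEquiv.toLinearMap_injective
  apply LinearMap.ext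
  intro x
  show w x = x
  conv_lhs => rw [decomp x]
  rw [map_sum]
  simp only [map_smul, hall]
  exact (decomp x).symm

/-- The action of `W(E₆)` on the `27` exceptional vectors is faithful: an element fixing
every exceptional vector is the identity. Hence restriction gives an embedding of `W(E₆)`
into the symmetric group on the `27` exceptional vectors. -/
theorem stmt_17 :
    (∀ w ∈ WE6, (∀ l : Fin 7 → ℤ, IsExc l → w l = l) → w = 1) ∧
    ∃ φ : WE6 →* Equiv.Perm {l : Fin 7 → ℤ // IsExc l},
      Function.Injective φ ∧
      ∀ (w : WE6) (l : {l : Fin 7 → ℤ // IsExc l}),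
        ((φ w l : {l : Fin 7 → ℤ // IsExc l}) : Fin 7 → ℤ) =
          (w : (Fin 7 → ℤ) ≃ₗ[ℤ] (Fin 7 → ℤ)) (l : Fin 7 → ℤ) := by
  constructor
  · intro w _ hfix
    exact fix_exc_eq_one w hfix
  · refine ⟨⟨⟨fun w => ⟨fun l => ⟨w.1 l.1, pres_exc (we6_pres w.1 w.2) l.2⟩,
        fun l => ⟨(w⁻¹ : WE6).1 l.1, pres_exc (we6_pres (w⁻¹ : WE6).1 (w⁻¹ : WE6).2) l.2⟩,
        ?_, ?_⟩, ?_⟩, ?_⟩, ?_, fun w l => rfl⟩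
    · intro l
      apply Subtype.ext
      show ((w⁻¹ : WE6).1 * w.1) l.1 = l.1
      rw [← Subgroup.coe_mul, inv_mul_cancel]
      rfl
    · intro l
      apply Subtype.ext
      show (w.1 * (w⁻¹ : WE6).1) l.1 = l.1
      rw [← Subgroup.coe_mul, mul_inv_cancel]
      rfl
    · apply Equiv.ext; intro l; rfl
    · intro a b
      apply Equiv.ext; intro l; rfl
    · rw [injective_iff_map_eq_one]
      intro w hw
      apply Subtype.ext
      apply fix_exc_eq_one
      intro l hl
      have := congrArg (fun p : Equiv.Perm {l : Fin 7 → ℤ // IsExc l} => (p ⟨l, hl⟩ : {l // IsExc l}).1) hw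
      exact this
end
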